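/- arXiv:1908.07232 — 6 statements merged into one kernel-verified Lean document; each statement's English description precedes it below -/
import Mathlib

section
/- Let n ≥ 1, let L_1, …, L_n be real numbers, and let α ∈ (0,1). Let F̂_n(y) = (1/n)·#{i : L_i ≤ y}, let v̂ = L_{(⌈nα⌉)} be the ⌈nα⌉-th smallest of the L_i, and let S_n = #{i : L_i = v̂}. Then for every v ∈ ℝ, |F̂_n(v̂) − F̂_n(v)| ≤ S_n/n + |F̂_n(v) − α|. -/
/-! The `⌈nα⌉`-th order statistic `v̂` has at least `⌈nα⌉` sample points `≤ v̂` and at most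
`⌈nα⌉ - 1` points `< v̂`, so `n F̂_n(v̂)` lies between `⌈nα⌉` and `⌈nα⌉ - 1 + S_n`. Since
`⌈nα⌉ - 1 < nα ≤ ⌈nα⌉`, this gives `|F̂_n(v̂) - α| ≤ S_n / n`, and the triangle inequality
through `α` finishes. -/

open Finset

section OrderStatistic

variable {β : Type*} [LinearOrder β] {n : ℕ} (L : Fin n → β) (k : Fin n)

theorem succ_le_card_filter_le_sort :
    (k : ℕ) + 1 ≤ #{i | L i ≤ L (Tuple.sort L k)} := by
  have hsub : (Iic k).image (Tuple.sort L) ⊆ ({i | L i ≤ L (Tuple.sort L k)} : Finset _) := by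
    rintro _ hi
    obtain ⟨j, hj, rfl⟩ := mem_image.mp hi
    simpa using Tuple.monotone_sort L (mem_Iic.mp hj)
  simpa [card_image_of_injective _ (Tuple.sort L).injective] using card_le_card hsub

theorem card_filter_lt_sort_le :
    #{i | L i < L (Tuple.sort L k)} ≤ k := by
  have hsub : ({i | L i < L (Tuple.sort L k)} : Finset _) ⊆ (Iio k).image (Tuple.sort L) := by
    intro i hi
    obtain ⟨j, rfl⟩ := (Tuple.sort L).surjective i
    refine mem_image.mpr ⟨j, mem_Iio.mpr ?_, rfl⟩
    by_contra! hkj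
    exact (mem_filter.mp hi).2.not_ge (Tuple.monotone_sort L hkj)
  simpa [card_image_of_injective _ (Tuple.sort L).injective] using card_le_card hsub

end OrderStatistic

theorem card_filter_le_eq_card_filter_lt_add_card_filter_eq {ι β : Type*} [Fintype ι]
    [LinearOrder β] (L : ι → β) (v : β) :
    #{i | L i ≤ v} = #{i | L i < v} + #{i | L i = v} := by
  classical
  rw [← card_union_of_disjoint (disjoint_filter.mpr fun _ _ h => h.ne), ← filter_or]
  simp only [le_iff_lt_or_eq]

theorem abs_div_sub_le_of_ceil_rank {n k c S : ℕ} {α : ℝ} (hn : 0 < n)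
    (hk_lt : (k : ℝ) < n * α) (hk_succ : (n : ℝ) * α ≤ k + 1)
    (hc_lo : k + 1 ≤ c) (hc_hi : c ≤ k + S) :
    |(c : ℝ) / n - α| ≤ S / n := by
  have hn' : (0 : ℝ) < n := Nat.cast_pos.mpr hn
  have hc_lo' : (k : ℝ) + 1 ≤ c := by exact_mod_cast hc_lo
  have hc_hi' : (c : ℝ) ≤ k + S := by exact_mod_cast hc_hi
  rw [show (c : ℝ) / n - α = (c - n * α) / n by field_simp, abs_div, Nat.abs_cast,
    div_le_div_iff_of_pos_right hn', abs_le]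
  constructor <;> linarith [(S.cast_nonneg : (0 : ℝ) ≤ S)]

theorem stmt_3_general (n : ℕ) (L : Fin n → ℝ) (α : ℝ) (hα : α ∈ Set.Ioo (0:ℝ) 1)
    (k : Fin n) (hk : (k : ℕ) = ⌈(n : ℝ) * α⌉₊ - 1)
    (vhat : ℝ) (hvhat : vhat = L (Tuple.sort L k))
    (S : ℕ) (hS : S = (Finset.univ.filter (fun i => L i = vhat)).card)
    (Fhat : ℝ → ℝ)
    (hF : ∀ y : ℝ, Fhat y = ((Finset.univ.filter (fun i => L i ≤ y)).card : ℝ) / n) :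
    ∀ v : ℝ, |Fhat vhat - Fhat v| ≤ (S : ℝ) / n + |Fhat v - α| := by
  intro v
  have hn : 0 < n := k.pos
  have hnα : 0 < (n : ℝ) * α := mul_pos (Nat.cast_pos.mpr hn) hα.1
  have hk_succ : (k : ℕ) + 1 = ⌈(n : ℝ) * α⌉₊ := by
    have := Nat.one_le_ceil_iff.mpr hnα
    omega
  have hk_lt : ((k : ℕ) : ℝ) < n * α := by
    have := Nat.ceil_lt_add_one hnα.le
    rw [← hk_succ, Nat.cast_succ] at this
    linarith
  have hk_le : (n : ℝ) * α ≤ (k : ℕ) + 1 := by exact_mod_cast hk_succ ▸ Nat.le_ceil _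
  have hc_hi : #{i | L i ≤ vhat} ≤ (k : ℕ) + S := by
    rw [card_filter_le_eq_card_filter_lt_add_card_filter_eq, hS, hvhat]
    exact Nat.add_le_add_right (card_filter_lt_sort_le L k) _
  have hvhat_near : |Fhat vhat - α| ≤ S / n := by
    rw [hF]
    exact abs_div_sub_le_of_ceil_rank hn hk_lt hk_le
      (hvhat ▸ succ_le_card_filter_le_sort L k) hc_hi
  calc |Fhat vhat - Fhat v| ≤ |Fhat vhat - α| + |α - Fhat v| := abs_sub_le _ _ _
    _ ≤ S / n + |Fhat v - α| := by rw [abs_sub_comm α]; linarith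

/-- For real numbers `L_1, …, L_n` with empirical CDF `F̂_n(y) = #{i : L_i ≤ y}/n`,
`v̂ = L_{(⌈nα⌉)}` the `⌈nα⌉`-th smallest value, and `S_n = #{i : L_i = v̂}`,
one has `|F̂_n(v̂) − F̂_n(v)| ≤ S_n/n + |F̂_n(v) − α|` for every `v ∈ ℝ`. -/
theorem stmt_3 (n : ℕ) (hn : 1 ≤ n) (L : Fin n → ℝ) (α : ℝ) (hα : α ∈ Set.Ioo (0:ℝ) 1)
    (k : Fin n) (hk : (k : ℕ) = ⌈(n : ℝ) * α⌉₊ - 1)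
    (vhat : ℝ) (hvhat : vhat = L (Tuple.sort L k))
    (S : ℕ) (hS : S = (Finset.univ.filter (fun i => L i = vhat)).card)
    (Fhat : ℝ → ℝ)
    (hF : ∀ y : ℝ, Fhat y = ((Finset.univ.filter (fun i => L i ≤ y)).card : ℝ) / n) :
    ∀ v : ℝ, |Fhat vhat - Fhat v| ≤ (S : ℝ) / n + |Fhat v - α| :=
  stmt_3_general n L α hα k hk vhat hvhat S hS Fhat hF
end

section
/- Let n ≥ 1, let L_1, …, L_n and c_1, …, c_n be real numbers with |c_i| ≤ M for all i and some M ≥ 0, and let α ∈ (0,1). Let F̂_n(y) = (1/n)·#{i : L_i ≤ y}, let v̂ = L_{(⌈nα⌉)} be the ⌈nα⌉-th smallest of the L_i, and let S_n = #{i : L_i = v̂}. Then for every v ∈ ℝ, |(1/n)·∑_{i=1}^n c_i (1{L_i > v̂} − 1{L_i > v})| ≤ M·(S_n/n + |F̂_n(v) − α|). -/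
/-- Core deterministic estimate of the bounded case: for `|c_i| ≤ M`,
`v̂ = L_{(⌈nα⌉)}` and `S_n = #{i : L_i = v̂}`, for every `v`,
`|(1/n)·∑ c_i(1{L_i > v̂} − 1{L_i > v})| ≤ M·(S_n/n + |F̂_n(v) − α|)`. -/
theorem stmt_6 (n : ℕ) (hn : 1 ≤ n) (L c : Fin n → ℝ) (M : ℝ) (hM : 0 ≤ M)
    (hc : ∀ i, |c i| ≤ M) (α : ℝ) (hα : α ∈ Set.Ioo (0:ℝ) 1)
    (k : Fin n) (hk : (k : ℕ) = ⌈(n : ℝ) * α⌉₊ - 1)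
    (vhat : ℝ) (hvhat : vhat = L (Tuple.sort L k))
    (S : ℕ) (hS : S = (Finset.univ.filter (fun i => L i = vhat)).card)
    (Fhat : ℝ → ℝ)
    (hF : ∀ y : ℝ, Fhat y = ((Finset.univ.filter (fun i => L i ≤ y)).card : ℝ) / n) :
    ∀ v : ℝ,
      |(1 / (n : ℝ)) * ∑ i, c i *
          ((if vhat < L i then (1:ℝ) else 0) - (if v < L i then 1 else 0))| ≤
        M * ((S : ℝ) / n + |Fhat v - α|) := by
  intro v
  obtain ⟨hα0, hα1⟩ := hα
  have hnpos : (0:ℝ) < n := by exact_mod_cast hn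
  have hnα : 0 < (n:ℝ) * α := by positivity
  have hceil1 : 1 ≤ ⌈(n:ℝ)*α⌉₊ := Nat.ceil_pos.mpr hnα
  set σ := Tuple.sort L with hσ
  have hmono : Monotone (L ∘ σ) := Tuple.monotone_sort L
  set A := (Finset.univ.filter (fun i => L i ≤ vhat)).card with hA
  set B := (Finset.univ.filter (fun i => L i ≤ v)).card with hB
  set T := (Finset.univ.filter (fun i => L i < vhat)).card with hT
  -- A ≥ k+1
  have hAge : (k:ℕ) + 1 ≤ A := by
    have hsub : (Finset.Iic k).image σ ⊆ Finset.univ.filter (fun i => L i ≤ vhat) := by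
      intro i hi
      simp only [Finset.mem_image, Finset.mem_Iic] at hi
      obtain ⟨j, hj, rfl⟩ := hi
      simp only [Finset.mem_filter, Finset.mem_univ, true_and]
      rw [hvhat]
      exact hmono hj
    calc (k:ℕ) + 1 = ((Finset.Iic k).image σ).card := by
          rw [Finset.card_image_of_injective _ σ.injective, Fin.card_Iic]
      _ ≤ A := Finset.card_le_card hsub
  -- T ≤ k
  have hTle : T ≤ (k:ℕ) := by
    have hsub : Finset.univ.filter (fun i => L i < vhat) ⊆ (Finset.Iio k).image σ := by
      intro i hi
      simp only [Finset.mem_filter, Finset.mem_univ, true_and] at hi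
      refine Finset.mem_image.mpr ⟨σ.symm i, ?_, by simp⟩
      simp only [Finset.mem_Iio]
      by_contra h
      push_neg at h
      have h2 := hmono h
      simp only [Function.comp_apply, Equiv.apply_symm_apply] at h2
      rw [hvhat] at hi
      linarith
    calc T ≤ ((Finset.Iio k).image σ).card := Finset.card_le_card hsub
      _ = (k:ℕ) := by rw [Finset.card_image_of_injective _ σ.injective, Fin.card_Iio]
  -- A = T + S
  have hAeq : A = T + S := by
    have hunion : Finset.univ.filter (fun i => L i < vhat) ∪
        Finset.univ.filter (fun i => L i = vhat) =
        Finset.univ.filter (fun i => L i ≤ vhat) := by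
      ext i
      simp only [Finset.mem_union, Finset.mem_filter, Finset.mem_univ, true_and]
      constructor
      · rintro (h | h)
        · exact le_of_lt h
        · exact le_of_eq h
      · intro h; exact lt_or_eq_of_le h
    have hdisj : Disjoint (Finset.univ.filter (fun i => L i < vhat))
        (Finset.univ.filter (fun i => L i = vhat)) := by
      rw [Finset.disjoint_left]
      intro i h1 h2
      simp only [Finset.mem_filter, Finset.mem_univ, true_and] at h1 h2
      exact absurd h2 (ne_of_lt h1)
    rw [hA, ← hunion, Finset.card_union_of_disjoint hdisj, hS]
  -- numeric facts about k
  have hkceil : (k:ℕ) + 1 = ⌈(n:ℝ)*α⌉₊ := by omega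
  have hk_lt : ((k:ℕ):ℝ) < (n:ℝ)*α := by
    have h1 : (⌈(n:ℝ)*α⌉₊ : ℝ) < (n:ℝ)*α + 1 := Nat.ceil_lt_add_one (le_of_lt hnα)
    have h2 : ((k:ℕ):ℝ) + 1 = (⌈(n:ℝ)*α⌉₊ : ℝ) := by exact_mod_cast hkceil
    linarith
  have hA_ge : (n:ℝ)*α ≤ (A:ℝ) := by
    have h1 : (n:ℝ)*α ≤ (⌈(n:ℝ)*α⌉₊ : ℝ) := Nat.le_ceil _
    have h2 : (⌈(n:ℝ)*α⌉₊ : ℝ) ≤ (A:ℝ) := by exact_mod_cast hkceil ▸ hAge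
    linarith
  have hA_lt : (A:ℝ) < (n:ℝ)*α + (S:ℝ) := by
    have h1 : (A:ℝ) = (T:ℝ) + (S:ℝ) := by exact_mod_cast hAeq
    have h2 : (T:ℝ) ≤ ((k:ℕ):ℝ) := by exact_mod_cast hTle
    linarith
  -- the main sum bound
  have key : |∑ i, c i * ((if vhat < L i then (1:ℝ) else 0) - (if v < L i then 1 else 0))|
      ≤ M * ((S:ℝ) + |(B:ℝ) - (n:ℝ)*α|) := by
    have habs : ∀ (t : Finset (Fin n)), |∑ i ∈ t, c i| ≤ M * (t.card : ℝ) := by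
      intro t
      calc |∑ i ∈ t, c i| ≤ ∑ i ∈ t, |c i| := Finset.abs_sum_le_sum_abs _ _
        _ ≤ ∑ _i ∈ t, M := Finset.sum_le_sum (fun i _ => hc i)
        _ = M * (t.card : ℝ) := by rw [Finset.sum_const, nsmul_eq_mul, mul_comm]
    rcases le_total v vhat with hv | hv
    · -- v ≤ vhat : diff = -(1{v < L ≤ vhat})
      have hdiff : ∀ i, (if vhat < L i then (1:ℝ) else 0) - (if v < L i then 1 else 0)
          = -(if v < L i ∧ L i ≤ vhat then (1:ℝ) else 0) := by
        intro i
        by_cases h1 : vhat < L i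
        · have h2 : v < L i := lt_of_le_of_lt hv h1
          simp [h1, h2, not_le.mpr h1]
        · by_cases h2 : v < L i
          · simp [h1, h2, not_lt.mp h1]
          · simp [h1, h2]
      have hsum : ∑ i, c i * ((if vhat < L i then (1:ℝ) else 0) - (if v < L i then 1 else 0))
          = -∑ i ∈ Finset.univ.filter (fun i => v < L i ∧ L i ≤ vhat), c i := by
        simp_rw [hdiff, Finset.sum_filter, mul_neg, mul_ite, mul_one, mul_zero,
          Finset.sum_neg_distrib]
      -- card of middle set = A - B
      have hcard : B + (Finset.univ.filter (fun i => v < L i ∧ L i ≤ vhat)).card = A := by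
        have hunion : Finset.univ.filter (fun i => L i ≤ v) ∪
            Finset.univ.filter (fun i => v < L i ∧ L i ≤ vhat) =
            Finset.univ.filter (fun i => L i ≤ vhat) := by
          ext i
          simp only [Finset.mem_union, Finset.mem_filter, Finset.mem_univ, true_and]
          constructor
          · rintro (h | ⟨h1, h2⟩)
            · exact le_trans h hv
            · exact h2
          · intro h
            rcases le_or_gt (L i) v with h' | h'
            · exact Or.inl h'
            · exact Or.inr ⟨h', h⟩
        have hdisj : Disjoint (Finset.univ.filter (fun i => L i ≤ v))
            (Finset.univ.filter (fun i => v < L i ∧ L i ≤ vhat)) := by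
          rw [Finset.disjoint_left]
          intro i h1 h2
          simp only [Finset.mem_filter, Finset.mem_univ, true_and] at h1 h2
          exact absurd h2.1 (not_lt.mpr h1)
        rw [hB, hA, ← hunion, Finset.card_union_of_disjoint hdisj]
      have hC : ((Finset.univ.filter (fun i => v < L i ∧ L i ≤ vhat)).card : ℝ)
          ≤ (S:ℝ) + |(B:ℝ) - (n:ℝ)*α| := by
        have h1 : ((Finset.univ.filter (fun i => v < L i ∧ L i ≤ vhat)).card : ℝ)
            = (A:ℝ) - (B:ℝ) := by
          have := hcard
          push_cast [← this]
          ring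
        have h2 : (n:ℝ)*α - (B:ℝ) ≤ |(B:ℝ) - (n:ℝ)*α| := by
          rw [abs_sub_comm]; exact le_abs_self _
        linarith
      rw [hsum, abs_neg]
      calc |∑ i ∈ Finset.univ.filter (fun i => v < L i ∧ L i ≤ vhat), c i|
          ≤ M * ((Finset.univ.filter (fun i => v < L i ∧ L i ≤ vhat)).card : ℝ) := habs _
        _ ≤ M * ((S:ℝ) + |(B:ℝ) - (n:ℝ)*α|) := by
            exact mul_le_mul_of_nonneg_left hC hM
    · -- vhat ≤ v : diff = 1{vhat < L ≤ v}
      have hdiff : ∀ i, (if vhat < L i then (1:ℝ) else 0) - (if v < L i then 1 else 0)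
          = (if vhat < L i ∧ L i ≤ v then (1:ℝ) else 0) := by
        intro i
        by_cases h1 : v < L i
        · have h2 : vhat < L i := lt_of_le_of_lt hv h1
          simp [h1, h2, not_le.mpr h1]
        · by_cases h2 : vhat < L i
          · simp [h1, h2, not_lt.mp h1]
          · simp [h1, h2]
      have hsum : ∑ i, c i * ((if vhat < L i then (1:ℝ) else 0) - (if v < L i then 1 else 0))
          = ∑ i ∈ Finset.univ.filter (fun i => vhat < L i ∧ L i ≤ v), c i := by
        simp_rw [hdiff, Finset.sum_filter, mul_ite, mul_one, mul_zero]
      have hcard : A + (Finset.univ.filter (fun i => vhat < L i ∧ L i ≤ v)).card = B := by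
        have hunion : Finset.univ.filter (fun i => L i ≤ vhat) ∪
            Finset.univ.filter (fun i => vhat < L i ∧ L i ≤ v) =
            Finset.univ.filter (fun i => L i ≤ v) := by
          ext i
          simp only [Finset.mem_union, Finset.mem_filter, Finset.mem_univ, true_and]
          constructor
          · rintro (h | ⟨h1, h2⟩)
            · exact le_trans h hv
            · exact h2
          · intro h
            rcases le_or_gt (L i) vhat with h' | h'
            · exact Or.inl h'
            · exact Or.inr ⟨h', h⟩
        have hdisj : Disjoint (Finset.univ.filter (fun i => L i ≤ vhat))
            (Finset.univ.filter (fun i => vhat < L i ∧ L i ≤ v)) := by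
          rw [Finset.disjoint_left]
          intro i h1 h2
          simp only [Finset.mem_filter, Finset.mem_univ, true_and] at h1 h2
          exact absurd h2.1 (not_lt.mpr h1)
        rw [hA, hB, ← hunion, Finset.card_union_of_disjoint hdisj]
      have hC : ((Finset.univ.filter (fun i => vhat < L i ∧ L i ≤ v)).card : ℝ)
          ≤ (S:ℝ) + |(B:ℝ) - (n:ℝ)*α| := by
        have h1 : ((Finset.univ.filter (fun i => vhat < L i ∧ L i ≤ v)).card : ℝ)
            = (B:ℝ) - (A:ℝ) := by
          have := hcard
          push_cast [← this]
          ring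
        have h2 : (B:ℝ) - (n:ℝ)*α ≤ |(B:ℝ) - (n:ℝ)*α| := le_abs_self _
        have hS0 : (0:ℝ) ≤ (S:ℝ) := Nat.cast_nonneg _
        linarith
      rw [hsum]
      calc |∑ i ∈ Finset.univ.filter (fun i => vhat < L i ∧ L i ≤ v), c i|
          ≤ M * ((Finset.univ.filter (fun i => vhat < L i ∧ L i ≤ v)).card : ℝ) := habs _
        _ ≤ M * ((S:ℝ) + |(B:ℝ) - (n:ℝ)*α|) := mul_le_mul_of_nonneg_left hC hM
  -- finish: divide by n
  have hFv : |Fhat v - α| = |(B:ℝ) - (n:ℝ)*α| / n := by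
    have h1 : Fhat v - α = ((B:ℝ) - (n:ℝ)*α) / n := by
      rw [hF v, ← hB]
      field_simp
    rw [h1, abs_div, abs_of_pos hnpos]
  rw [abs_mul, abs_of_pos (by positivity : (0:ℝ) < 1/(n:ℝ))]
  rw [hFv]
  have : M * ((S:ℝ)/n + |(B:ℝ) - (n:ℝ)*α| / n) = (1/(n:ℝ)) * (M * ((S:ℝ) + |(B:ℝ) - (n:ℝ)*α|)) := by
    field_simp
  rw [this]
  exact mul_le_mul_of_nonneg_left key (by positivity)
end

section
/- Let α ∈ (0,1), and for each n ≥ 1 let L_{n,1}, …, L_{n,n} be real numbers. Let (v̂_n) be a sequence of reals with v̂_n → v for some v ∈ ℝ, and suppose (1/n)·∑_{i=1}^n (L_{n,i} − v)⁺ → m for some m ∈ ℝ. Then the CVaR estimator ĉ_n = v̂_n + (1/(n(1−α)))·∑_{i=1}^n (L_{n,i} − v̂_n)⁺ converges to v + m/(1−α). -/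
/-!
`ĉ_n` is `v̂_n` plus `(1 - α)⁻¹` times the empirical mean excess over the threshold `v̂_n`.
Since `y ↦ (a - y)⁺` is 1-Lipschitz, this mean excess differs from the one over `v` by at most
`|v̂_n - v| → 0`.
-/

open Filter Finset Topology

noncomputable def meanExcess (L : ℕ → ℝ) (n : ℕ) (x : ℝ) : ℝ :=
  (1 / (n : ℝ)) * ∑ i ∈ range n, max (L i - x) 0

lemma abs_max_sub_sub_max_sub_le (a x y : ℝ) : |max (a - x) 0 - max (a - y) 0| ≤ |x - y| :=
  calc |max (a - x) 0 - max (a - y) 0| ≤ |(a - x) - (a - y)| := abs_max_sub_max_le_abs _ _ _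
    _ = |x - y| := by rw [sub_sub_sub_cancel_left, abs_sub_comm]

lemma abs_meanExcess_sub_le (L : ℕ → ℝ) (n : ℕ) (x y : ℝ) :
    |meanExcess L n x - meanExcess L n y| ≤ |x - y| := by
  rcases n.eq_zero_or_pos with rfl | hn
  · simp [meanExcess]
  calc |meanExcess L n x - meanExcess L n y|
      = (1 / n) * |∑ i ∈ range n, (max (L i - x) 0 - max (L i - y) 0)| := by
        rw [meanExcess, meanExcess, ← mul_sub, ← sum_sub_distrib, abs_mul,
          abs_of_pos (by positivity)]
    _ ≤ (1 / n) * ∑ _i ∈ range n, |x - y| := by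
        gcongr
        exact (abs_sum_le_sum_abs _ _).trans
          (sum_le_sum fun i _ => abs_max_sub_sub_max_sub_le _ _ _)
    _ = |x - y| := by
        rw [sum_const, card_range, nsmul_eq_mul]
        field_simp

lemma tendsto_meanExcess_of_tendsto {L : ℕ → ℕ → ℝ} {vhat : ℕ → ℝ} {v m : ℝ}
    (hv : Tendsto vhat atTop (𝓝 v))
    (hm : Tendsto (fun n => meanExcess (L n) n v) atTop (𝓝 m)) :
    Tendsto (fun n => meanExcess (L n) n (vhat n)) atTop (𝓝 m) := by
  have hdiff : Tendsto (fun n => meanExcess (L n) n (vhat n) - meanExcess (L n) n v)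
      atTop (𝓝 0) :=
    squeeze_zero_norm (fun n => abs_meanExcess_sub_le (L n) n (vhat n) v)
      (by simpa using (hv.sub_const v).norm)
  simpa using hdiff.add hm

theorem stmt_7_general (α : ℝ) (L : ℕ → ℕ → ℝ)
    (vhat : ℕ → ℝ) (v m : ℝ)
    (hv : Tendsto vhat atTop (nhds v))
    (hm : Tendsto (fun n : ℕ => (1 / (n : ℝ)) * ∑ i ∈ Finset.range n, max (L n i - v) 0)
      atTop (nhds m)) :
    Tendsto (fun n : ℕ => vhat n +
        (1 / ((n : ℝ) * (1 - α))) * ∑ i ∈ Finset.range n, max (L n i - vhat n) 0)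
      atTop (nhds (v + m / (1 - α))) := by
  have hcvar : (fun n : ℕ => vhat n +
        (1 / ((n : ℝ) * (1 - α))) * ∑ i ∈ Finset.range n, max (L n i - vhat n) 0)
      = fun n => vhat n + (1 - α)⁻¹ * meanExcess (L n) n (vhat n) := by
    funext n
    simp only [meanExcess, one_div, mul_inv]
    ring
  rw [hcvar, div_eq_inv_mul]
  exact hv.add ((tendsto_meanExcess_of_tendsto hv hm).const_mul _)

/-- Deterministic convergence of the CVaR estimator: if `v̂_n → v` and the
sample averages `(1/n)·∑_{i<n} (L_{n,i} − v)⁺ → m`, then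
`ĉ_n = v̂_n + (1/(n(1−α)))·∑_{i<n} (L_{n,i} − v̂_n)⁺ → v + m/(1−α)`. -/
theorem stmt_7 (α : ℝ) (hα : α ∈ Set.Ioo (0:ℝ) 1) (L : ℕ → ℕ → ℝ)
    (vhat : ℕ → ℝ) (v m : ℝ)
    (hv : Tendsto vhat atTop (nhds v))
    (hm : Tendsto (fun n : ℕ => (1 / (n : ℝ)) * ∑ i ∈ Finset.range n, max (L n i - v) 0)
      atTop (nhds m)) :
    Tendsto (fun n : ℕ => vhat n +
        (1 / ((n : ℝ) * (1 - α))) * ∑ i ∈ Finset.range n, max (L n i - vhat n) 0)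
      atTop (nhds (v + m / (1 - α))) :=
  stmt_7_general α L vhat v m hv hm
end

section
/- Let α ∈ (0,1), γ > 0, and v, c′ ∈ ℝ. For each n ≥ 1 let L_{n,1}, …, L_{n,n} and L′_{n,1}, …, L′_{n,n} be real numbers, let F̂_n(y) = (1/n)·#{i : L_{n,i} ≤ y} be the empirical CDF of row n, and let (v̂_n) be a sequence of reals. Assume: (i) (1/n)·∑_{i=1}^n |L′_{n,i}|^{1+γ} converges to a finite limit; (ii) (1/(n(1−α)))·∑_{i=1}^n L′_{n,i}·1{L_{n,i} > v} → c′; (iii) F̂_n(v̂_n) − F̂_n(v) → 0. Then (1/(n(1−α)))·∑_{i=1}^n L′_{n,i}·1{L_{n,i} > v̂_n} → c′. -/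
/-!
The two estimators differ by `(1 - α)⁻¹ · (1/n) ∑ L′ᵢ dᵢ` with
`dᵢ = 1{v̂ₙ < Lᵢ} - 1{v < Lᵢ} ∈ {-1, 0, 1}`, and `(1/n) ∑ |dᵢ| = |F̂ₙ(v̂ₙ) - F̂ₙ(v)|`.
Hölder's inequality with `p = 1 + γ` and its conjugate `q`, together with `|dᵢ|^q ≤ |dᵢ|`,
bounds the difference by `((1/n) ∑ |L′ᵢ|^p)^(1/p) · |F̂ₙ(v̂ₙ) - F̂ₙ(v)|^(1/q) → D^(1/p) · 0 = 0`.
-/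

open Filter Finset

section
variable {ι : Type*} (s : Finset ι)

lemma sum_abs_ite_lt_sub_ite_lt (x : ι → ℝ) (a b : ℝ) :
    ∑ i ∈ s, |(if a < x i then (1 : ℝ) else 0) - (if b < x i then 1 else 0)|
      = |(#{i ∈ s | x i ≤ a} : ℝ) - #{i ∈ s | x i ≤ b}| := by
  wlog hab : a ≤ b generalizing a b
  · rw [abs_sub_comm, ← this b a (le_of_not_ge hab)]
    exact sum_congr rfl fun i _ => abs_sub_comm _ _
  have hterm : ∀ i ∈ s, |(if a < x i then (1 : ℝ) else 0) - (if b < x i then 1 else 0)|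
      = (if x i ≤ b then 1 else 0) - (if x i ≤ a then 1 else 0) := by
    intro i _
    by_cases ha : x i ≤ a
    · simp [ha, ha.trans hab, not_lt.2 ha, not_lt.2 (ha.trans hab)]
    · by_cases hb : x i ≤ b <;> simp [ha, hb, not_le.1 ha, not_lt.2, not_le.1]
  have hcard : #{i ∈ s | x i ≤ a} ≤ #{i ∈ s | x i ≤ b} :=
    card_le_card (monotone_filter_right _ fun _ _ h => h.trans hab)
  rw [sum_congr rfl hterm, sum_sub_distrib, sum_boole, sum_boole, abs_sub_comm,
    abs_of_nonneg (sub_nonneg.2 (by exact_mod_cast hcard))]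

lemma abs_sum_mul_le_of_abs_le_one {p q : ℝ} (hpq : p.HolderConjugate q) (f g : ι → ℝ)
    (hg : ∀ i ∈ s, |g i| ≤ 1) :
    |∑ i ∈ s, f i * g i| ≤ (∑ i ∈ s, |f i| ^ p) ^ (1 / p) * (∑ i ∈ s, |g i|) ^ (1 / q) := by
  have hgq : ∑ i ∈ s, |g i| ^ q ≤ ∑ i ∈ s, |g i| := sum_le_sum fun i hi =>
    Real.rpow_le_self_of_le_one (abs_nonneg _) (hg i hi) hpq.symm.lt.le
  calc |∑ i ∈ s, f i * g i| ≤ ∑ i ∈ s, |f i| * |g i| := by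
        simpa only [abs_mul] using abs_sum_le_sum_abs (fun i => f i * g i) s
    _ ≤ (∑ i ∈ s, |f i| ^ p) ^ (1 / p) * (∑ i ∈ s, |g i| ^ q) ^ (1 / q) := by
        simpa only [abs_abs] using Real.inner_le_Lp_mul_Lq s (|f ·|) (|g ·|) hpq
    _ ≤ _ := by
        gcongr
        exact one_div_nonneg.2 hpq.symm.pos.le

lemma mul_abs_sum_mul_le_of_abs_le_one {p q : ℝ} (hpq : p.HolderConjugate q) {c : ℝ}
    (hc : 0 ≤ c) (f g : ι → ℝ) (hg : ∀ i ∈ s, |g i| ≤ 1) :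
    c * |∑ i ∈ s, f i * g i|
      ≤ (c * ∑ i ∈ s, |f i| ^ p) ^ (1 / p) * (c * ∑ i ∈ s, |g i|) ^ (1 / q) := by
  have hsplit : c ^ (1 / p) * c ^ (1 / q) = c := by
    rw [← Real.rpow_add' hc (by rw [hpq.one_div_add_one_div]; norm_num), hpq.one_div_add_one_div,
      div_one, Real.rpow_one]
  rw [Real.mul_rpow hc (sum_nonneg fun i _ => Real.rpow_nonneg (abs_nonneg _) _),
    Real.mul_rpow hc (sum_nonneg fun i _ => abs_nonneg _)]
  calc c * |∑ i ∈ s, f i * g i|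
      ≤ c * ((∑ i ∈ s, |f i| ^ p) ^ (1 / p) * (∑ i ∈ s, |g i|) ^ (1 / q)) :=
        mul_le_mul_of_nonneg_left (abs_sum_mul_le_of_abs_le_one s hpq f g hg) hc
    _ = _ := by nth_rw 1 [← hsplit]; ring

lemma tendsto_mul_sum_mul_zero_of_abs_le_one {κ : Type*} {l : Filter κ} {p q D : ℝ}
    (hpq : p.HolderConjugate q) {c : κ → ℝ} (hc : ∀ k, 0 ≤ c k) {s : κ → Finset ι}
    {f g : κ → ι → ℝ} (hg : ∀ k, ∀ i ∈ s k, |g k i| ≤ 1)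
    (hf : Tendsto (fun k => c k * ∑ i ∈ s k, |f k i| ^ p) l (nhds D))
    (hg0 : Tendsto (fun k => c k * ∑ i ∈ s k, |g k i|) l (nhds 0)) :
    Tendsto (fun k => c k * ∑ i ∈ s k, f k i * g k i) l (nhds 0) := by
  have hbound := (hf.rpow_const (Or.inr (one_div_nonneg.2 hpq.pos.le))).mul
    (hg0.rpow_const (Or.inr (one_div_nonneg.2 hpq.symm.pos.le)))
  rw [Real.zero_rpow (one_div_pos.2 hpq.symm.pos).ne', mul_zero] at hbound
  refine squeeze_zero_norm (fun k => ?_) hbound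
  rw [Real.norm_eq_abs, abs_mul, abs_of_nonneg (hc k)]
  exact mul_abs_sum_mul_le_of_abs_le_one _ hpq (hc k) _ _ (hg k)

end

theorem stmt_8_general (α γ v c' : ℝ) (hγ : 0 < γ)
    (L L' : ℕ → ℕ → ℝ) (vhat : ℕ → ℝ)
    (Fhat : ℕ → ℝ → ℝ)
    (hF : ∀ n : ℕ, ∀ y : ℝ,
      Fhat n y = (((Finset.range n).filter (fun i => L n i ≤ y)).card : ℝ) / n)
    (D : ℝ)
    (hD : Tendsto (fun n : ℕ => (1 / (n : ℝ)) * ∑ i ∈ Finset.range n, |L' n i| ^ (1 + γ))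
      atTop (nhds D))
    (hmu : Tendsto (fun n : ℕ => (1 / ((n : ℝ) * (1 - α))) *
        ∑ i ∈ Finset.range n, L' n i * (if v < L n i then (1:ℝ) else 0))
      atTop (nhds c'))
    (hFF : Tendsto (fun n : ℕ => Fhat n (vhat n) - Fhat n v) atTop (nhds 0)) :
    Tendsto (fun n : ℕ => (1 / ((n : ℝ) * (1 - α))) *
        ∑ i ∈ Finset.range n, L' n i * (if vhat n < L n i then (1:ℝ) else 0))
      atTop (nhds c') := by
  set g : ℕ → ℕ → ℝ := fun n i =>
    (if vhat n < L n i then 1 else 0) - (if v < L n i then 1 else 0) with hg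
  have hg_le : ∀ n i, |g n i| ≤ 1 := fun n i => by simp only [hg]; split_ifs <;> norm_num
  have hcount : ∀ n : ℕ, 1 / (n : ℝ) * ∑ i ∈ range n, |g n i| = |Fhat n (vhat n) - Fhat n v| :=
    fun n => by
      rw [sum_abs_ite_lt_sub_ite_lt, hF, hF, ← sub_div, abs_div, Nat.abs_cast, one_div_mul_eq_div]
  have hdiff : Tendsto (fun n : ℕ => 1 / (n : ℝ) * ∑ i ∈ range n, L' n i * g n i) atTop (nhds 0) :=
    tendsto_mul_sum_mul_zero_of_abs_le_one (.conjExponent (by linarith)) (fun n => by positivity)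
      (fun n i _ => hg_le n i) hD (by simpa only [hcount, abs_zero] using hFF.abs)
  have hscale : ∀ (n : ℕ) (x : ℝ), 1 / ((n : ℝ) * (1 - α)) * x = (1 - α)⁻¹ * (1 / n * x) :=
    fun n x => by rw [one_div, mul_inv]; ring
  have hsum := hmu.add (hdiff.const_mul (1 - α)⁻¹)
  rw [mul_zero, add_zero] at hsum
  refine hsum.congr fun n => ?_
  simp only [hscale]
  simp only [hg, mul_sub, sum_sub_distrib]
  ring

/-- Deterministic convergence argument for the IPA CVaR sensitivity estimator:
if the averages `(1/n)·∑ |L′_{n,i}|^{1+γ}` converge to a finite limit, the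
estimator at the true threshold `v` converges to `c′`, and
`F̂_n(v̂_n) − F̂_n(v) → 0`, then the estimator at the estimated thresholds
`v̂_n` also converges to `c′`. -/
theorem stmt_8 (α γ v c' : ℝ) (hα : α ∈ Set.Ioo (0:ℝ) 1) (hγ : 0 < γ)
    (L L' : ℕ → ℕ → ℝ) (vhat : ℕ → ℝ)
    (Fhat : ℕ → ℝ → ℝ)
    (hF : ∀ n : ℕ, ∀ y : ℝ,
      Fhat n y = (((Finset.range n).filter (fun i => L n i ≤ y)).card : ℝ) / n)
    (D : ℝ)
    (hD : Tendsto (fun n : ℕ => (1 / (n : ℝ)) * ∑ i ∈ Finset.range n, |L' n i| ^ (1 + γ))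
      atTop (nhds D))
    (hmu : Tendsto (fun n : ℕ => (1 / ((n : ℝ) * (1 - α))) *
        ∑ i ∈ Finset.range n, L' n i * (if v < L n i then (1:ℝ) else 0))
      atTop (nhds c'))
    (hFF : Tendsto (fun n : ℕ => Fhat n (vhat n) - Fhat n v) atTop (nhds 0)) :
    Tendsto (fun n : ℕ => (1 / ((n : ℝ) * (1 - α))) *
        ∑ i ∈ Finset.range n, L' n i * (if vhat n < L n i then (1:ℝ) else 0))
      atTop (nhds c') :=
  stmt_8_general α γ v c' hγ L L' vhat Fhat hF D hD hmu hFF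
end

section
/- Let L be an integrable real random variable on a probability space with CDF F(y) = ℙ(L ≤ y), let α ∈ (0,1), and define the lower quantile function q(β) = inf{y ∈ ℝ : F(y) ≥ β} for β ∈ (0,1) and v = q(α). Then ∫_α^1 q(β) dβ = (1−α)·v + 𝔼[(L − v)⁺], i.e., the two expressions (1/(1−α))·∫_α^1 q(β) dβ and v + (1/(1−α))·𝔼[(L − v)⁺] for the α-CVaR of L coincide. -/
open MeasureTheory ProbabilityTheory Set Filter

/-! The lower quantile function `q` of a law `ν` on `ℝ` satisfies the Galois connection
`q β ≤ t ↔ β ≤ F t` for `β ∈ (0,1)`, so it pushes Lebesgue measure on `(0,1)` forward to `ν`.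
Hence `∫_0^1 (q β - v)⁺ dβ = 𝔼[(L - v)⁺]`. Since `q` is monotone with `v = q α`, the integrand
vanishes on `(0,α]` and equals `q β - v` on `(α,1)`, which gives
`∫_α^1 q = (1 - α) v + 𝔼[(L - v)⁺]`. -/

lemma Real.volume_Ioo_inter_Iic {a b c : ℝ} (hcb : c ≤ b) :
    volume (Ioo a b ∩ Iic c) = ENNReal.ofReal (c - a) := by
  have h_lower : Ioo a c ⊆ Ioo a b ∩ Iic c := fun _ hx => ⟨⟨hx.1, hx.2.trans_le hcb⟩, hx.2.le⟩
  have h_upper : Ioo a b ∩ Iic c ⊆ Ioc a c := fun _ hx => ⟨hx.1.1, hx.2⟩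
  exact le_antisymm ((measure_mono h_upper).trans_eq Real.volume_Ioc)
    (Real.volume_Ioo.symm.trans_le (measure_mono h_lower))

namespace ProbabilityTheory

/-- Only meaningful for `β ∈ (0,1)`: otherwise the set is empty or unbounded below and `sInf`
returns `0`. -/
noncomputable def quantile (ν : Measure ℝ) (β : ℝ) : ℝ := sInf {y | β ≤ cdf ν y}

variable {ν : Measure ℝ} {β t : ℝ}

lemma bddBelow_setOf_le_cdf (hβ : 0 < β) : BddBelow {y | β ≤ cdf ν y} := by
  obtain ⟨z, hz⟩ := ((tendsto_cdf_atBot ν).eventually (eventually_lt_nhds hβ)).exists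
  exact ⟨z, fun y hy => ((monotone_cdf ν).reflect_lt (hz.trans_le hy)).le⟩

lemma nonempty_setOf_le_cdf (hβ : β < 1) : {y | β ≤ cdf ν y}.Nonempty :=
  ((tendsto_cdf_atTop ν).eventually (eventually_ge_nhds hβ)).exists

lemma quantile_le_iff (hβ : β ∈ Ioo 0 1) : quantile ν β ≤ t ↔ β ≤ cdf ν t := by
  refine ⟨fun h => ?_, fun h => csInf_le (bddBelow_setOf_le_cdf hβ.1) h⟩
  have h_right : ∀ y ∈ Ioi t, β ≤ cdf ν y := fun y hy => by
    obtain ⟨s, hs, hsy⟩ := exists_lt_of_csInf_lt (nonempty_setOf_le_cdf hβ.2) (h.trans_lt hy)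
    exact hs.trans (monotone_cdf ν hsy.le)
  exact ge_of_tendsto (((cdf ν).right_continuous t).mono Ioi_subset_Ici_self)
    (eventually_nhdsWithin_of_forall h_right)

lemma le_cdf_quantile (hβ : β ∈ Ioo 0 1) : β ≤ cdf ν (quantile ν β) :=
  (quantile_le_iff hβ).1 le_rfl

lemma monotoneOn_quantile : MonotoneOn (quantile ν) (Ioo 0 1) := fun _ ha _ hb hab =>
  (quantile_le_iff ha).2 (hab.trans (le_cdf_quantile hb))

lemma aemeasurable_quantile : AEMeasurable (quantile ν) (volume.restrict (Ioo 0 1)) :=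
  aemeasurable_restrict_of_monotoneOn measurableSet_Ioo monotoneOn_quantile

variable [IsProbabilityMeasure ν]

lemma map_quantile_volume : (volume.restrict (Ioo 0 1)).map (quantile ν) = ν := by
  refine Measure.ext_of_Iic _ _ fun t => ?_
  have h_preimage : quantile ν ⁻¹' Iic t ∩ Ioo 0 1 = Ioo 0 1 ∩ Iic (cdf ν t) := by
    ext β
    simp only [mem_inter_iff, mem_preimage, mem_Iic]
    exact ⟨fun h => ⟨h.2, (quantile_le_iff h.2).1 h.1⟩,
      fun h => ⟨(quantile_le_iff h.1).2 h.2, h.1⟩⟩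
  rw [Measure.map_apply_of_aemeasurable aemeasurable_quantile measurableSet_Iic,
    Measure.restrict_apply' measurableSet_Ioo, h_preimage,
    Real.volume_Ioo_inter_Iic (cdf_le_one ν t), sub_zero, ofReal_cdf]

lemma integral_comp_quantile {f : ℝ → ℝ} (hf : AEStronglyMeasurable f ν) :
    ∫ β in Ioo 0 1, f (quantile ν β) = ∫ x, f x ∂ν := by
  rw [← integral_map aemeasurable_quantile (by rwa [map_quantile_volume]), map_quantile_volume]

lemma integrableOn_comp_quantile {f : ℝ → ℝ} (hf : Integrable f ν) :
    IntegrableOn (fun β => f (quantile ν β)) (Ioo 0 1) := by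
  rw [← map_quantile_volume (ν := ν)] at hf
  exact hf.comp_aemeasurable aemeasurable_quantile

theorem setIntegral_Ioo_quantile (hν : Integrable id ν) {α : ℝ} (hα : α ∈ Ioo 0 1) :
    ∫ β in Ioo α 1, quantile ν β =
      (1 - α) * quantile ν α + ∫ x, max (x - quantile ν α) 0 ∂ν := by
  set v := quantile ν α
  have hsub : Ioo α 1 ⊆ Ioo 0 1 := Ioo_subset_Ioo_left hα.1.le
  have h_int : IntegrableOn (quantile ν) (Ioo α 1) :=
    (integrableOn_comp_quantile hν).mono_set hsub
  have h_excess : ∫ β in Ioo α 1, (quantile ν β - v) = ∫ x, max (x - v) 0 ∂ν := calc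
    _ = ∫ β in Ioo α 1, max (quantile ν β - v) 0 :=
        setIntegral_congr_fun measurableSet_Ioo fun β hβ => (max_eq_left
          (sub_nonneg.2 (monotoneOn_quantile hα (hsub hβ) hβ.1.le))).symm
    _ = ∫ β in Ioo 0 1, max (quantile ν β - v) 0 :=
        (setIntegral_eq_of_subset_of_forall_sdiff_eq_zero measurableSet_Ioo hsub
          fun β hβ => max_eq_right (sub_nonpos.2 (monotoneOn_quantile hβ.1 hα
            (not_lt.1 fun h => hβ.2 ⟨h, hβ.1.2⟩)))).symm
    _ = _ := integral_comp_quantile (f := fun x => max (x - v) 0) (by fun_prop)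
  rw [integral_sub h_int (integrableOn_const measure_Ioo_lt_top.ne), setIntegral_const,
    Real.volume_real_Ioo_of_le hα.2.le, smul_eq_mul] at h_excess
  linarith

end ProbabilityTheory

/-- The two representations of α-CVaR coincide: with `F` the CDF of an
integrable random variable `L`, `q` the lower quantile function and
`v = q(α)`, one has `∫_α^1 q(β) dβ = (1−α)·v + 𝔼[(L − v)⁺]`. -/
theorem stmt_13 {Ω : Type*} [MeasurableSpace Ω] (μ : Measure Ω) [IsProbabilityMeasure μ]
    (L : Ω → ℝ) (hL : Integrable L μ) (α : ℝ) (hα : α ∈ Set.Ioo (0:ℝ) 1)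
    (F : ℝ → ℝ) (hF : ∀ y : ℝ, F y = (μ {ω | L ω ≤ y}).toReal)
    (q : ℝ → ℝ) (hq : ∀ β ∈ Set.Ioo (0:ℝ) 1, q β = sInf {y : ℝ | β ≤ F y})
    (v : ℝ) (hv : v = q α) :
    ∫ β in Set.Ioo α 1, q β = (1 - α) * v + ∫ ω, max (L ω - v) 0 ∂μ := by
  set ν := μ.map L
  have : IsProbabilityMeasure ν := Measure.isProbabilityMeasure_map hL.aemeasurable
  have hF_cdf : F = cdf ν := funext fun y => by
    rw [hF, cdf_eq_real, map_measureReal_apply_of_aemeasurable hL.aemeasurable measurableSet_Iic]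
    rfl
  have hq_quantile : ∀ β ∈ Ioo 0 1, q β = quantile ν β := fun β hβ => by
    rw [hq β hβ, quantile, hF_cdf]
  have hν : Integrable id ν :=
    (integrable_map_measure aestronglyMeasurable_id hL.aemeasurable).2 hL
  calc ∫ β in Ioo α 1, q β = ∫ β in Ioo α 1, quantile ν β :=
        setIntegral_congr_fun measurableSet_Ioo fun β hβ =>
          hq_quantile β ⟨hα.1.trans hβ.1, hβ.2⟩
    _ = (1 - α) * v + ∫ x, max (x - v) 0 ∂ν := by
        rw [hv, hq_quantile α hα]
        exact setIntegral_Ioo_quantile hν hα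
    _ = _ := congr_arg _ (integral_map (f := fun x => max (x - v) 0) hL.aemeasurable (by fun_prop))
end

section
/- Let (Ω, ℱ, ℙ) be a probability space, α ∈ (0,1), and Θ ⊆ ℝ an open interval. Let L : Θ × Ω → ℝ with L(θ,·) measurable for each θ and L(θ₀,·) integrable for some θ₀ ∈ Θ. Assume: (i) there is an integrable K : Ω → [0,∞) such that for ℙ-a.e. ω, |L(θ₂,ω) − L(θ₁,ω)| ≤ K(ω)·|θ₂ − θ₁| for all θ₁, θ₂ ∈ Θ; (ii) for ℙ-a.e. ω, θ ↦ L(θ,ω) is differentiable on Θ with derivative L′(θ,ω); (iii) v : Θ → ℝ is differentiable on Θ; (iv) for every θ ∈ Θ, ℙ(L(θ,·) = v(θ)) = 0 and ℙ(L(θ,·) ≤ v(θ)) = α. Define c(θ) = v(θ) + (1/(1−α))·𝔼[(L(θ,·) − v(θ))⁺]. Then c is differentiable on Θ and for every θ ∈ Θ, c′(θ) = (1/(1−α))·𝔼[L′(θ,·)·1{L(θ,·) > v(θ)}]. -/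
/-!
For almost every `ω` (those with `L(θ,ω) ≠ v(θ)`) the map `x ↦ (L(x,ω) − v(x))⁺` is
differentiable at `θ` with derivative `(L′(θ,ω) − v′(θ))·1{L(θ,ω) > v(θ)}`, and its increments
from `θ` are bounded by `(K(ω) + M)·|x − θ|`, where `M` bounds the difference quotients of `v`
near `θ`. Dominated differentiation under the integral therefore applies, and since
`ℙ(L(θ) > v(θ)) = 1 − α`, the terms in `v′(θ)` cancel in `c′(θ)`.
-/

open MeasureTheory Filter Topology

section ParametricIntegral

variable {α 𝕜 E : Type*} [MeasurableSpace α] {μ : Measure α} [RCLike 𝕜]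
  [NormedAddCommGroup E] [NormedSpace ℝ E] [NormedSpace 𝕜 E] [CompleteSpace E]

theorem hasDerivAt_integral_of_dominated_loc_of_lip' {F : 𝕜 → α → E} {F' : α → E} {x₀ : 𝕜}
    {s : Set 𝕜} {bound : α → ℝ} (hs : s ∈ 𝓝 x₀)
    (hF_meas : ∀ x ∈ s, AEStronglyMeasurable (F x) μ) (hF_int : Integrable (F x₀) μ)
    (hF'_meas : AEStronglyMeasurable F' μ)
    (h_lipsch : ∀ᵐ a ∂μ, ∀ x ∈ s, ‖F x a - F x₀ a‖ ≤ bound a * ‖x - x₀‖)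
    (bound_integrable : Integrable bound μ)
    (h_diff : ∀ᵐ a ∂μ, HasDerivAt (F · a) (F' a) x₀) :
    Integrable F' μ ∧ HasDerivAt (fun x ↦ ∫ a, F x a ∂μ) (∫ a, F' a ∂μ) x₀ := by
  let toCLM : E →L[𝕜] 𝕜 →L[𝕜] E := ContinuousLinearMap.smulRightL 𝕜 𝕜 E 1
  obtain ⟨hint, hderiv⟩ := hasFDerivAt_integral_of_dominated_loc_of_lip' (F' := (toCLM <| F' ·))
    hs hF_meas hF_int (toCLM.continuous.comp_aestronglyMeasurable hF'_meas) h_lipsch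
    bound_integrable (h_diff.mono fun _ ha ↦ ha.hasFDerivAt)
  have hF'_int : Integrable F' μ := by simpa [toCLM] using hint.apply_continuousLinearMap 1
  refine ⟨hF'_int, hasDerivAt_iff_hasFDerivAt.2 ?_⟩
  rwa [toCLM.integral_comp_comm hF'_int] at hderiv

end ParametricIntegral

section

variable {Ω 𝕜 E : Type*} [MeasurableSpace Ω] {μ : Measure Ω} [NontriviallyNormedField 𝕜]
  [NormedAddCommGroup E] [NormedSpace 𝕜 E]

theorem aestronglyMeasurable_of_hasDerivAt {L : 𝕜 → Ω → E} {L' : Ω → E} {θ : 𝕜}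
    (hmeas : ∀ᶠ t in 𝓝 θ, AEStronglyMeasurable (L t) μ)
    (hdiff : ∀ᵐ ω ∂μ, HasDerivAt (L · ω) (L' ω) θ) : AEStronglyMeasurable L' μ := by
  classical
  -- the slopes are only known to be measurable near `θ`, so they are replaced by `0` elsewhere
  let slopes : 𝕜 → Ω → E := fun t ↦
    if AEStronglyMeasurable (L t) μ then fun ω ↦ slope (L · ω) θ t else 0
  refine aestronglyMeasurable_of_tendsto_ae (𝓝[≠] θ) (f := slopes) (fun t ↦ ?_) ?_
  · by_cases ht : AEStronglyMeasurable (L t) μ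
    · simp only [slopes, if_pos ht, slope]
      exact (ht.sub hmeas.self_of_nhds).const_smul _
    · simp only [slopes, if_neg ht]
      exact aestronglyMeasurable_const
  · filter_upwards [hdiff] with ω hω
    refine (hasDerivAt_iff_tendsto_slope.1 hω).congr' ?_
    filter_upwards [nhdsWithin_le_nhds hmeas] with t ht
    simp [slopes, ht]

end

theorem HasDerivAt.max_zero_of_ne_zero {f : ℝ → ℝ} {f' x : ℝ} (hf : HasDerivAt f f' x)
    (hx : f x ≠ 0) : HasDerivAt (fun t ↦ max (f t) 0) (if 0 < f x then f' else 0) x := by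
  rcases hx.lt_or_gt with hneg | hpos
  · have hzero : (fun t ↦ max (f t) 0) =ᶠ[𝓝 x] fun _ ↦ 0 := by
      filter_upwards [hf.continuousAt.eventually_lt continuousAt_const hneg] with t ht
      exact max_eq_right ht.le
    simpa [hneg.not_gt] using (hasDerivAt_const x (0 : ℝ)).congr_of_eventuallyEq hzero
  · have hself : (fun t ↦ max (f t) 0) =ᶠ[𝓝 x] f := by
      filter_upwards [continuousAt_const.eventually_lt hf.continuousAt hpos] with t ht
      exact max_eq_left ht.le
    simpa [hpos] using hf.congr_of_eventuallyEq hself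

section

variable {Ω : Type*} [MeasurableSpace Ω] {μ : Measure Ω}

theorem MeasureTheory.Integrable.of_abs_sub_le_mul {f g K : Ω → ℝ} {C : ℝ} (hg : Integrable g μ)
    (hK : Integrable K μ) (hf : AEStronglyMeasurable f μ) (h : ∀ᵐ ω ∂μ, |f ω - g ω| ≤ K ω * C) :
    Integrable f μ := by
  have hdiff : Integrable (f - g) μ :=
    (hK.mul_const C).mono' (hf.sub hg.1) (by simpa only [Pi.sub_apply, Real.norm_eq_abs] using h)
  simpa using hdiff.add hg

theorem integral_ite_sub_const [IsFiniteMeasure μ] {p : Ω → Prop} [DecidablePred p]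
    (hp : MeasurableSet {ω | p ω}) {f : Ω → ℝ} {b : ℝ}
    (hf : Integrable (fun ω ↦ if p ω then f ω - b else 0) μ) :
    ∫ ω, (if p ω then f ω - b else 0) ∂μ
      = ∫ ω, f ω * (if p ω then 1 else 0) ∂μ - b * μ.real {ω | p ω} := by
  have hone (ω : Ω) : (if p ω then (1 : ℝ) else 0) = {ω | p ω}.indicator 1 ω := by
    simp [Set.indicator_apply]
  have hind : Integrable (fun ω ↦ b * if p ω then (1 : ℝ) else 0) μ := by
    simp_rw [hone]
    exact ((integrable_const (μ := μ) (1 : ℝ)).indicator hp).const_mul b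
  have hsplit : (fun ω ↦ f ω * if p ω then (1 : ℝ) else 0)
      = fun ω ↦ (if p ω then f ω - b else 0) + b * if p ω then (1 : ℝ) else 0 := by
    ext ω; split_ifs <;> ring
  rw [hsplit, integral_add hf hind, integral_const_mul]
  simp_rw [hone]
  rw [integral_indicator_one hp]
  ring

theorem hasDerivAt_integral_max_sub_zero [IsFiniteMeasure μ] {L : ℝ → Ω → ℝ} {L' K : Ω → ℝ}
    {v : ℝ → ℝ} {v' θ : ℝ} {s : Set ℝ} (hs : s ∈ 𝓝 θ) (hmeas : ∀ x ∈ s, Measurable (L x))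
    (hint : Integrable (L θ) μ) (hKint : Integrable K μ)
    (hlip : ∀ᵐ ω ∂μ, ∀ x ∈ s, |L x ω - L θ ω| ≤ K ω * |x - θ|)
    (hdiff : ∀ᵐ ω ∂μ, HasDerivAt (L · ω) (L' ω) θ) (hv : HasDerivAt v v' θ)
    (hatom : μ {ω | L θ ω = v θ} = 0) :
    HasDerivAt (fun x ↦ ∫ ω, max (L x ω - v x) 0 ∂μ)
      (∫ ω, L' ω * (if v θ < L θ ω then 1 else 0) ∂μ - v' * μ.real {ω | v θ < L θ ω}) θ := by
  obtain ⟨M, hvM⟩ := hv.isBigO_sub.bound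
  have hLθ : Measurable (L θ) := hmeas θ (mem_of_mem_nhds hs)
  have htail : MeasurableSet {ω | v θ < L θ ω} := measurableSet_lt measurable_const hLθ
  have hL'meas : AEStronglyMeasurable L' μ :=
    aestronglyMeasurable_of_hasDerivAt
      (eventually_of_mem hs fun x hx ↦ (hmeas x hx).aestronglyMeasurable) hdiff
  have hF'meas : AEStronglyMeasurable (fun ω ↦ if v θ < L θ ω then L' ω - v' else 0) μ := by
    convert (hL'meas.sub (aestronglyMeasurable_const (b := v'))).indicator htail using 1
    ext ω
    simp [Set.indicator_apply]
  have hnoatom : ∀ᵐ ω ∂μ, L θ ω ≠ v θ := measure_eq_zero_iff_ae_notMem.1 hatom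
  obtain ⟨hF'int, hderiv⟩ := hasDerivAt_integral_of_dominated_loc_of_lip' (μ := μ)
    (F := fun x ω ↦ max (L x ω - v x) 0) (bound := fun ω ↦ K ω + M) (inter_mem hs hvM)
    (fun x hx ↦ (((hmeas x hx.1).sub_const _).max measurable_const).aestronglyMeasurable)
    (hint.sub (integrable_const _)).pos_part hF'meas
    (by
      filter_upwards [hlip] with ω hω x hx
      calc ‖max (L x ω - v x) 0 - max (L θ ω - v θ) 0‖
          ≤ |(L x ω - L θ ω) - (v x - v θ)| := by
            rw [Real.norm_eq_abs, sub_sub_sub_comm]; exact abs_max_sub_max_le_abs _ _ _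
        _ ≤ |L x ω - L θ ω| + |v x - v θ| := abs_sub _ _
        _ ≤ K ω * |x - θ| + M * |x - θ| := add_le_add (hω x hx.1) hx.2
        _ = (K ω + M) * ‖x - θ‖ := by rw [Real.norm_eq_abs]; ring)
    (hKint.add (integrable_const M))
    (by
      filter_upwards [hdiff, hnoatom] with ω hω hne
      have hgap : HasDerivAt (fun x ↦ L x ω - v x) (L' ω - v') θ := hω.sub hv
      simpa only [sub_pos] using hgap.max_zero_of_ne_zero (sub_ne_zero.2 hne))
  rwa [integral_ite_sub_const htail hF'int] at hderiv

end

theorem stmt_14_general {Ω : Type*} [MeasurableSpace Ω] (μ : Measure Ω) [IsProbabilityMeasure μ]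
    (α : ℝ) (hα : α ∈ Set.Ioo (0:ℝ) 1)
    (Θ : Set ℝ) (hΘopen : IsOpen Θ)
    (L L' : ℝ → Ω → ℝ)
    (hmeas : ∀ θ ∈ Θ, Measurable (L θ))
    (θ₀ : ℝ) (hθ₀ : θ₀ ∈ Θ) (hint : Integrable (L θ₀) μ)
    (K : Ω → ℝ) (hKint : Integrable K μ)
    (hlip : ∀ᵐ ω ∂μ, ∀ θ₁ ∈ Θ, ∀ θ₂ ∈ Θ, |L θ₂ ω - L θ₁ ω| ≤ K ω * |θ₂ - θ₁|)
    (hdiff : ∀ᵐ ω ∂μ, ∀ θ ∈ Θ, HasDerivAt (fun t => L t ω) (L' θ ω) θ)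
    (v : ℝ → ℝ) (hv : ∀ θ ∈ Θ, DifferentiableAt ℝ v θ)
    (hatom : ∀ θ ∈ Θ, μ {ω | L θ ω = v θ} = 0)
    (hquant : ∀ θ ∈ Θ, (μ {ω | L θ ω ≤ v θ}).toReal = α)
    (c : ℝ → ℝ)
    (hc : ∀ θ ∈ Θ, c θ = v θ + (1 / (1 - α)) * ∫ ω, max (L θ ω - v θ) 0 ∂μ) :
    ∀ θ ∈ Θ, HasDerivAt c
      ((1 / (1 - α)) * ∫ ω, L' θ ω * (if v θ < L θ ω then (1:ℝ) else 0) ∂μ) θ := by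
  intro θ hθ
  have hΘθ : Θ ∈ 𝓝 θ := hΘopen.mem_nhds hθ
  have hLθ : Integrable (L θ) μ :=
    hint.of_abs_sub_le_mul hKint (hmeas θ hθ).aestronglyMeasurable
      (hlip.mono fun ω hω ↦ hω θ₀ hθ₀ θ hθ)
  have htail : μ.real {ω | v θ < L θ ω} = 1 - α := by
    have hcompl : {ω | v θ < L θ ω} = {ω | L θ ω ≤ v θ}ᶜ := by ext; simp
    rw [hcompl, probReal_compl_eq_one_sub (measurableSet_le (hmeas θ hθ) measurable_const),
      measureReal_def, hquant θ hθ]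
  have hES := hasDerivAt_integral_max_sub_zero hΘθ hmeas hLθ hKint
    (hlip.mono fun ω hω x hx ↦ hω θ hθ x hx) (hdiff.mono fun ω hω ↦ hω θ hθ)
    (hv θ hθ).hasDerivAt (hatom θ hθ)
  have hceq : c =ᶠ[𝓝 θ] fun x ↦ v x + (1 / (1 - α)) * ∫ ω, max (L x ω - v x) 0 ∂μ :=
    eventually_of_mem hΘθ hc
  refine (((hv θ hθ).hasDerivAt.add (hES.const_mul _)).congr_of_eventuallyEq hceq).congr_deriv ?_
  have h1α : 1 - α ≠ 0 := (sub_pos.2 hα.2).ne'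
  rw [htail]
  field_simp
  ring

/-- IPA formula for the CVaR sensitivity (interchange of expectation and
differentiation): under an a.s. Lipschitz condition with integrable modulus,
a.s. differentiability of `θ ↦ L(θ,·)`, differentiability of the VaR function
`v`, the no-atom condition `ℙ(L(θ) = v(θ)) = 0` and `ℙ(L(θ) ≤ v(θ)) = α`,
the CVaR `c(θ) = v(θ) + (1/(1−α))·𝔼[(L(θ) − v(θ))⁺]` is differentiable on `Θ`
with `c′(θ) = (1/(1−α))·𝔼[L′(θ)·1{L(θ) > v(θ)}]`. -/
theorem stmt_14 {Ω : Type*} [MeasurableSpace Ω] (μ : Measure Ω) [IsProbabilityMeasure μ]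
    (α : ℝ) (hα : α ∈ Set.Ioo (0:ℝ) 1)
    (Θ : Set ℝ) (hΘopen : IsOpen Θ) (hΘconn : Θ.OrdConnected)
    (L L' : ℝ → Ω → ℝ)
    (hmeas : ∀ θ ∈ Θ, Measurable (L θ))
    (θ₀ : ℝ) (hθ₀ : θ₀ ∈ Θ) (hint : Integrable (L θ₀) μ)
    (K : Ω → ℝ) (hK0 : ∀ ω, 0 ≤ K ω) (hKint : Integrable K μ)
    (hlip : ∀ᵐ ω ∂μ, ∀ θ₁ ∈ Θ, ∀ θ₂ ∈ Θ, |L θ₂ ω - L θ₁ ω| ≤ K ω * |θ₂ - θ₁|)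
    (hdiff : ∀ᵐ ω ∂μ, ∀ θ ∈ Θ, HasDerivAt (fun t => L t ω) (L' θ ω) θ)
    (v : ℝ → ℝ) (hv : ∀ θ ∈ Θ, DifferentiableAt ℝ v θ)
    (hatom : ∀ θ ∈ Θ, μ {ω | L θ ω = v θ} = 0)
    (hquant : ∀ θ ∈ Θ, (μ {ω | L θ ω ≤ v θ}).toReal = α)
    (c : ℝ → ℝ)
    (hc : ∀ θ ∈ Θ, c θ = v θ + (1 / (1 - α)) * ∫ ω, max (L θ ω - v θ) 0 ∂μ) :
    ∀ θ ∈ Θ, HasDerivAt c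
      ((1 / (1 - α)) * ∫ ω, L' θ ω * (if v θ < L θ ω then (1:ℝ) else 0) ∂μ) θ :=
  stmt_14_general μ α hα Θ hΘopen L L' hmeas θ₀ hθ₀ hint K hKint hlip hdiff v hv hatom hquant c hc
end
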